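/- Conditional decomposition of the tilted path measure: if R decomposes as R = R_{<t} + R_{≥t} where R_{<t} depends only on the history up to time t and R_{≥t} on the history from time t on, and P_F is a Markov path measure, then the tilted measure P_B ∝ e^{βR} P_F satisfies P_B[future | past up to x_t] = e^{β R_{≥t}} P_F[future | x_t] / Z_t(x_t), depending on the past only through x_t. -/

import Mathlib

open Real Finset

/-- The state trajectory generated from initial state `x0` by deterministic
transition `f` and action sequence `u`. -/
def trajState11 {X A : Type*} (f : X → A → X) (x0 : X) (u : ℕ → A) : ℕ → X
  | 0 => x0
  | t + 1 => f (trajState11 f x0 u t) (u t)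

/-- Extend a finite action history to an infinite one. -/
def padActions11 {A : Type*} [Inhabited A] (T : ℕ) (ω : Fin T → A) : ℕ → A :=
  fun t => if h : t < T then ω ⟨t, h⟩ else default

/-!
The tilted weight `e^{βR} P_F` of a path is the product over time steps of
`e^{β γ^s r(x_s, a_s)} π(a_s | x_s)`. States before `t` are determined by the actions before `t`,
and states from `t` on by `x_t` and the actions from `t` on, so this product splits into a past
factor, constant on the paths sharing the history up to `t`, times a future factor depending only
on `x_t` and the future actions. The past factor and the global normalisation cancel in the
conditional probability, leaving `e^{βR_{≥t}} P_F[future | x_t] / Z_t`. Finally `Z_t`, the sum of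
future factors over the paths with a given past, depends only on `x_t`: splicing another past with
the same state at time `t` onto each path is a bijection of fibers preserving the future factor.
-/

theorem Finset.prod_eq_prod_ite_mul_prod_ite_not {ι M : Type*} [Fintype ι] [CommMonoid M]
    (p : ι → Prop) [DecidablePred p] (g : ι → M) :
    ∏ i, g i = (∏ i, if p i then g i else 1) * ∏ i, if ¬p i then g i else 1 := by
  rw [← prod_filter, ← prod_filter, prod_filter_mul_prod_filter_not]

theorem div_div_sum_div_eq_div_sum {ι K : Type*} [Field K] {s : Finset ι} {c g : ι → K}
    {i : ι} {N : K} (hN : N ≠ 0) (hc : ∀ j ∈ s, c j = c i) (hci : c i ≠ 0) :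
    c i * g i / N / ∑ j ∈ s, c j * g j / N = g i / ∑ j ∈ s, g j := by
  rw [sum_congr rfl fun j hj => by rw [hc j hj], ← sum_div, ← mul_sum,
    div_div_div_cancel_right₀ hN, mul_div_mul_left _ _ hci]

theorem Real.exp_mul_sum_mul_prod {ι : Type*} (s : Finset ι) (β : ℝ) (u v : ι → ℝ) :
    exp (β * ∑ i ∈ s, u i) * ∏ i ∈ s, v i = ∏ i ∈ s, exp (β * u i) * v i := by
  rw [mul_sum, exp_sum, prod_mul_distrib]

theorem Real.exp_mul_sum_ite_mul_prod_ite {ι : Type*} (s : Finset ι) (p : ι → Prop)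
    [DecidablePred p] (β : ℝ) (u v : ι → ℝ) :
    exp (β * ∑ i ∈ s, if p i then u i else 0) * ∏ i ∈ s, (if p i then v i else 1) =
      ∏ i ∈ s, if p i then exp (β * u i) * v i else 1 := by
  rw [exp_mul_sum_mul_prod]
  refine prod_congr rfl fun i _ => ?_
  split_ifs <;> simp

section PastFiber

variable {ι A : Type*} [Fintype ι] [DecidableEq ι] [Fintype A] [DecidableEq A]

def pastFiber (p : ι → Prop) [DecidablePred p] (ω : ι → A) : Finset (ι → A) :=
  univ.filter fun ω' => ∀ s, p s → ω' s = ω s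

@[simp]
theorem mem_pastFiber {p : ι → Prop} [DecidablePred p] {ω ω' : ι → A} :
    ω' ∈ pastFiber p ω ↔ ∀ s, p s → ω' s = ω s := by
  simp [pastFiber]

theorem sum_pastFiber_eq_of_splice {M : Type*} [AddCommMonoid M] (p : ι → Prop)
    [DecidablePred p] {ω₁ ω₂ : ι → A} (F : (ι → A) → M)
    (hF : ∀ ω ∈ pastFiber p ω₁, F ω = F fun s => if p s then ω₂ s else ω s) :
    ∑ ω ∈ pastFiber p ω₁, F ω = ∑ ω ∈ pastFiber p ω₂, F ω := by
  refine sum_nbij' (fun ω s => if p s then ω₂ s else ω s)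
    (fun ω s => if p s then ω₁ s else ω s)
    (fun _ _ => mem_pastFiber.2 fun _ hs => if_pos hs)
    (fun _ _ => mem_pastFiber.2 fun _ hs => if_pos hs) ?_ ?_ hF
  all_goals
    intro ω hω
    funext s
    by_cases hs : p s
    · simp [hs, mem_pastFiber.1 hω s hs]
    · simp [hs]

end PastFiber

section Trajectory

variable {X A : Type*} (f : X → A → X) (x0 : X)

theorem trajState11_eq_of_eqOn_lt {u v : ℕ → A} {n : ℕ} (h : ∀ s < n, u s = v s) :
    trajState11 f x0 u n = trajState11 f x0 v n := by
  induction n with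
  | zero => rfl
  | succ n ih =>
    rw [trajState11, trajState11, ih fun s hs => h s (by omega), h n n.lt_succ_self]

theorem trajState11_eq_of_eq_of_eqOn_ge {u v : ℕ → A} {t n : ℕ} (htn : t ≤ n)
    (hstate : trajState11 f x0 u t = trajState11 f x0 v t) (h : ∀ s, t ≤ s → u s = v s) :
    trajState11 f x0 u n = trajState11 f x0 v n := by
  induction n, htn using Nat.le_induction with
  | base => exact hstate
  | succ n htn ih => rw [trajState11, trajState11, ih, h n htn]

variable [Inhabited A] {T : ℕ}

theorem padActions11_congr {ω ω' : Fin T → A} {n : ℕ}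
    (h : ∀ hn : n < T, ω ⟨n, hn⟩ = ω' ⟨n, hn⟩) :
    padActions11 T ω n = padActions11 T ω' n := by
  unfold padActions11
  split_ifs with hn
  exacts [h hn, rfl]

theorem trajState11_padActions11_eq_of_eqOn_lt {ω ω' : Fin T → A} {t n : ℕ} (hn : n ≤ t)
    (h : ∀ s : Fin T, (s : ℕ) < t → ω s = ω' s) :
    trajState11 f x0 (padActions11 T ω) n = trajState11 f x0 (padActions11 T ω') n :=
  trajState11_eq_of_eqOn_lt f x0 fun s hs =>
    padActions11_congr fun hsT => h ⟨s, hsT⟩ (by simp; omega)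

theorem trajState11_padActions11_eq_of_eq_of_eqOn_ge {ω ω' : Fin T → A} {t n : ℕ}
    (htn : t ≤ n)
    (hstate : trajState11 f x0 (padActions11 T ω) t = trajState11 f x0 (padActions11 T ω') t)
    (h : ∀ s : Fin T, t ≤ (s : ℕ) → ω s = ω' s) :
    trajState11 f x0 (padActions11 T ω) n = trajState11 f x0 (padActions11 T ω') n :=
  trajState11_eq_of_eq_of_eqOn_ge f x0 htn hstate fun s hs =>
    padActions11_congr fun hsT => h ⟨s, hsT⟩ hs

end Trajectory

section TiltedPath

variable {X A M : Type*} [Inhabited A] {T : ℕ} (f : X → A → X) (x0 : X) (w : ℕ → X → A → M)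
  (t : ℕ)

def pastWeight [CommMonoid M] (ω : Fin T → A) : M :=
  ∏ s : Fin T, if (s : ℕ) < t then w s (trajState11 f x0 (padActions11 T ω) s) (ω s) else 1

def futureWeight [CommMonoid M] (ω : Fin T → A) : M :=
  ∏ s : Fin T, if t ≤ (s : ℕ) then w s (trajState11 f x0 (padActions11 T ω) s) (ω s) else 1

theorem prod_eq_pastWeight_mul_futureWeight [CommMonoid M] (ω : Fin T → A) :
    ∏ s : Fin T, w s (trajState11 f x0 (padActions11 T ω) s) (ω s) =
      pastWeight f x0 w t ω * futureWeight f x0 w t ω := by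
  rw [prod_eq_prod_ite_mul_prod_ite_not fun s : Fin T => (s : ℕ) < t]
  simp only [not_lt, pastWeight, futureWeight]

variable {f x0 w t}

theorem pastWeight_pos [CommSemiring M] [PartialOrder M] [IsStrictOrderedRing M]
    (hw : ∀ s x a, 0 < w s x a) (ω : Fin T → A) : 0 < pastWeight f x0 w t ω :=
  prod_pos fun _ _ => by split_ifs; exacts [hw .., one_pos]

theorem futureWeight_pos [CommSemiring M] [PartialOrder M] [IsStrictOrderedRing M]
    (hw : ∀ s x a, 0 < w s x a) (ω : Fin T → A) : 0 < futureWeight f x0 w t ω :=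
  prod_pos fun _ _ => by split_ifs; exacts [hw .., one_pos]

theorem pastWeight_congr [CommMonoid M] {ω ω' : Fin T → A}
    (h : ∀ s : Fin T, (s : ℕ) < t → ω s = ω' s) :
    pastWeight f x0 w t ω = pastWeight f x0 w t ω' := by
  refine prod_congr rfl fun s _ => ?_
  split_ifs with hs
  · rw [trajState11_padActions11_eq_of_eqOn_lt f x0 hs.le h, h s hs]
  · rfl

theorem futureWeight_congr [CommMonoid M] {ω ω' : Fin T → A}
    (hstate : trajState11 f x0 (padActions11 T ω) t = trajState11 f x0 (padActions11 T ω') t)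
    (h : ∀ s : Fin T, t ≤ (s : ℕ) → ω s = ω' s) :
    futureWeight f x0 w t ω = futureWeight f x0 w t ω' := by
  refine prod_congr rfl fun s _ => ?_
  split_ifs with hs
  · rw [trajState11_padActions11_eq_of_eq_of_eqOn_ge f x0 hs hstate h, h s hs]
  · rfl

/-- The partition function `Z_t` depends on the history only through the state at time `t`. -/
theorem sum_futureWeight_pastFiber_congr [CommSemiring M] [Fintype A] [DecidableEq A]
    {ω₁ ω₂ : Fin T → A}
    (hstate : trajState11 f x0 (padActions11 T ω₁) t = trajState11 f x0 (padActions11 T ω₂) t) :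
    ∑ ω ∈ pastFiber (fun s : Fin T => (s : ℕ) < t) ω₁, futureWeight f x0 w t ω =
      ∑ ω ∈ pastFiber (fun s : Fin T => (s : ℕ) < t) ω₂, futureWeight f x0 w t ω := by
  refine sum_pastFiber_eq_of_splice _ _ fun ω hω =>
    futureWeight_congr ?_ fun s hs => (if_neg (not_lt.2 hs)).symm
  rw [trajState11_padActions11_eq_of_eqOn_lt f x0 le_rfl (mem_pastFiber.1 hω), hstate,
    trajState11_padActions11_eq_of_eqOn_lt f x0 le_rfl fun s hs => (if_pos hs).symm]

end TiltedPath

theorem tilted_path_measure_conditional_decomposition_general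
    {X A : Type*} [Fintype A] [DecidableEq A] [Inhabited A]
    (T : ℕ) (f : X → A → X) (x0 : X) (pol : X → A → ℝ)
    (hpos : ∀ x a, 0 < pol x a)
    (r : X → A → ℝ) (γ β : ℝ)
    (t : ℕ)
    (xs : (Fin T → A) → ℕ → X)
    (hxs : ∀ ω, xs ω = trajState11 f x0 (padActions11 T ω))
    (PF : (Fin T → A) → ℝ)
    (hPF : ∀ ω, PF ω = ∏ s : Fin T, pol (xs ω s) (ω s))
    (R : (Fin T → A) → ℝ)
    (hR : ∀ ω, R ω = ∑ s : Fin T, γ ^ (s : ℕ) * r (xs ω s) (ω s))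
    (Rge : (Fin T → A) → ℝ)
    (hRge : ∀ ω, Rge ω =
      ∑ s : Fin T, if t ≤ (s : ℕ) then γ ^ (s : ℕ) * r (xs ω s) (ω s) else 0)
    (PB : (Fin T → A) → ℝ)
    (hPB : ∀ ω, PB ω = Real.exp (β * R ω) * PF ω /
      ∑ ω' : Fin T → A, Real.exp (β * R ω') * PF ω')
    (PFfut : (Fin T → A) → ℝ)
    (hPFfut : ∀ ω, PFfut ω =
      ∏ s : Fin T, if t ≤ (s : ℕ) then pol (xs ω s) (ω s) else 1)
    (Z : (Fin T → A) → ℝ)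
    (hZ : ∀ ω, Z ω =
      ∑ ω' ∈ Finset.univ.filter
        (fun ω' : Fin T → A => ∀ s : Fin T, (s : ℕ) < t → ω' s = ω s),
        Real.exp (β * Rge ω') * PFfut ω') :
    (∀ ω : Fin T → A,
      PB ω /
          ∑ ω' ∈ Finset.univ.filter
            (fun ω' : Fin T → A => ∀ s : Fin T, (s : ℕ) < t → ω' s = ω s),
            PB ω' =
        Real.exp (β * Rge ω) * PFfut ω / Z ω) ∧
    (∀ ω₁ ω₂ : Fin T → A,
      xs ω₁ t = xs ω₂ t → (∀ s : Fin T, t ≤ (s : ℕ) → ω₁ s = ω₂ s) →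
      PB ω₁ /
          ∑ ω' ∈ Finset.univ.filter
            (fun ω' : Fin T → A => ∀ s : Fin T, (s : ℕ) < t → ω' s = ω₁ s),
            PB ω' =
        PB ω₂ /
          ∑ ω' ∈ Finset.univ.filter
            (fun ω' : Fin T → A => ∀ s : Fin T, (s : ℕ) < t → ω' s = ω₂ s),
            PB ω') := by
  obtain rfl : xs = fun ω => trajState11 f x0 (padActions11 T ω) := funext hxs
  beta_reduce at *
  -- not `rfl`: the statement's filter carries a different `Decidable` instance
  have hfiber : ∀ ω,
      univ.filter (fun ω' : Fin T → A => ∀ s : Fin T, (s : ℕ) < t → ω' s = ω s) =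
        pastFiber (fun s : Fin T => (s : ℕ) < t) ω := fun _ => by ext; simp
  simp only [hfiber] at hZ ⊢
  set w : ℕ → X → A → ℝ := fun s x a => exp (β * (γ ^ s * r x a)) * pol x a
  have hw_pos : ∀ s x a, 0 < w s x a := fun s x a => mul_pos (exp_pos _) (hpos x a)
  have hfuture : ∀ ω, exp (β * Rge ω) * PFfut ω = futureWeight f x0 w t ω := fun ω => by
    rw [hRge, hPFfut, exp_mul_sum_ite_mul_prod_ite, futureWeight]
  have hweight : ∀ ω, exp (β * R ω) * PF ω = pastWeight f x0 w t ω * futureWeight f x0 w t ω :=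
    fun ω => by
      rw [hR, hPF, exp_mul_sum_mul_prod]
      exact prod_eq_pastWeight_mul_futureWeight f x0 w t ω
  simp only [hPB, hweight, hZ, hfuture]
  have hnorm : ∑ ω : Fin T → A, pastWeight f x0 w t ω * futureWeight f x0 w t ω ≠ 0 :=
    (sum_pos (fun ω _ => mul_pos (pastWeight_pos hw_pos ω) (futureWeight_pos hw_pos ω))
      univ_nonempty).ne'
  have hcond := fun ω : Fin T → A => div_div_sum_div_eq_div_sum (c := pastWeight f x0 w t)
    (g := futureWeight f x0 w t) hnorm
    (fun ω' hω' => pastWeight_congr (mem_pastFiber.1 hω')) (pastWeight_pos hw_pos ω).ne'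
  refine ⟨hcond, fun ω₁ ω₂ hstate hfut => ?_⟩
  rw [hcond, hcond, futureWeight_congr hstate hfut, sum_futureWeight_pastFiber_congr hstate]

/-- Conditional decomposition of the tilted path measure: conditioned on the
history up to time t, P_B ∝ e^{βR} P_F gives the future probability
e^{βR_{≥t}} P_F[future|x_t]/Z_t(x_t), which depends on the past only through
the state x_t. -/
theorem tilted_path_measure_conditional_decomposition
    {X A : Type*} [Fintype X] [Fintype A] [DecidableEq A] [Inhabited A]
    (T : ℕ) (f : X → A → X) (x0 : X) (pol : X → A → ℝ)
    (hpos : ∀ x a, 0 < pol x a) (hsum : ∀ x, ∑ a : A, pol x a = 1)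
    (r : X → A → ℝ) (γ β : ℝ) (hγ : 0 < γ) (hγ1 : γ < 1) (hβ : 0 < β)
    (t : ℕ) (ht : t ≤ T)
    (xs : (Fin T → A) → ℕ → X)
    (hxs : ∀ ω, xs ω = trajState11 f x0 (padActions11 T ω))
    (PF : (Fin T → A) → ℝ)
    (hPF : ∀ ω, PF ω = ∏ s : Fin T, pol (xs ω s) (ω s))
    (R : (Fin T → A) → ℝ)
    (hR : ∀ ω, R ω = ∑ s : Fin T, γ ^ (s : ℕ) * r (xs ω s) (ω s))
    (Rge : (Fin T → A) → ℝ)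
    (hRge : ∀ ω, Rge ω =
      ∑ s : Fin T, if t ≤ (s : ℕ) then γ ^ (s : ℕ) * r (xs ω s) (ω s) else 0)
    (PB : (Fin T → A) → ℝ)
    (hPB : ∀ ω, PB ω = Real.exp (β * R ω) * PF ω /
      ∑ ω' : Fin T → A, Real.exp (β * R ω') * PF ω')
    (PFfut : (Fin T → A) → ℝ)
    (hPFfut : ∀ ω, PFfut ω =
      ∏ s : Fin T, if t ≤ (s : ℕ) then pol (xs ω s) (ω s) else 1)
    (Z : (Fin T → A) → ℝ)
    (hZ : ∀ ω, Z ω =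
      ∑ ω' ∈ Finset.univ.filter
        (fun ω' : Fin T → A => ∀ s : Fin T, (s : ℕ) < t → ω' s = ω s),
        Real.exp (β * Rge ω') * PFfut ω') :
    (∀ ω : Fin T → A,
      PB ω /
          ∑ ω' ∈ Finset.univ.filter
            (fun ω' : Fin T → A => ∀ s : Fin T, (s : ℕ) < t → ω' s = ω s),
            PB ω' =
        Real.exp (β * Rge ω) * PFfut ω / Z ω) ∧
    (∀ ω₁ ω₂ : Fin T → A,
      xs ω₁ t = xs ω₂ t → (∀ s : Fin T, t ≤ (s : ℕ) → ω₁ s = ω₂ s) →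
      PB ω₁ /
          ∑ ω' ∈ Finset.univ.filter
            (fun ω' : Fin T → A => ∀ s : Fin T, (s : ℕ) < t → ω' s = ω₁ s),
            PB ω' =
        PB ω₂ /
          ∑ ω' ∈ Finset.univ.filter
            (fun ω' : Fin T → A => ∀ s : Fin T, (s : ℕ) < t → ω' s = ω₂ s),
            PB ω') :=
  tilted_path_measure_conditional_decomposition_general T f x0 pol hpos r γ β t xs hxs PF hPF R hR
    Rge hRge PB hPB PFfut hPFfut Z hZ
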